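/- If B is a finite q⁺_n-crystal, then its character f := ch(B) = Σ_{b∈B} x_1^{wt(b)_1}⋯x_n^{wt(b)_n} ∈ ℤ[x_1,…,x_n] lies in the ring Sym_Q(x_1,…,x_n); explicitly: f is a symmetric polynomial; if n ≥ 2 then the substitution f(x_1, −x_1, x_3, …, x_n) lies in ℤ[x_3,…,x_n]; and f − f(0, x_2, …, x_n) lies in the ideal 2x_1·ℤ[x_1,…,x_n]. -/

import Mathlib

namespace QPaper

abbrev Std := ℕ × Bool
abbrev PLetter := ℤ × Bool
abbrev NLet := ℕ × Bool
abbrev Tab := ℕ × ℕ → Option NLet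
abbrev ZTab := ℕ × ℕ → Option PLetter

/-- iterate a partial operator -/
def iterO {B : Type} (g : B → Option B) : ℕ → B → Option B
  | 0, b => some b
  | k + 1, b => (iterO g k b).bind g

/-- Raw data of a crystal with operators `e_i, f_i` (`1 ≤ i ≤ n-1`),
`e_1bar, f_1bar`, `e_0, f_0`, and a weight map with coordinates indexed `1,…,n`. -/
structure Crystal (n : ℕ) (B : Type) where
  wt : B → ℕ → ℤ
  e : ℕ → B → Option B
  f : ℕ → B → Option B
  ebar : B → Option B
  fbar : B → Option B
  e0 : B → Option B
  f0 : B → Option B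

namespace Crystal

variable {n : ℕ} {B B' B'' : Type}

noncomputable def eps (C : Crystal n B) (i : ℕ) (b : B) : ℕ := sSup {k | iterO (C.e i) k b ≠ none}
noncomputable def phi (C : Crystal n B) (i : ℕ) (b : B) : ℕ := sSup {k | iterO (C.f i) k b ≠ none}
noncomputable def epsBar (C : Crystal n B) (b : B) : ℕ := sSup {k | iterO C.ebar k b ≠ none}
noncomputable def phiBar (C : Crystal n B) (b : B) : ℕ := sSup {k | iterO C.fbar k b ≠ none}
noncomputable def eps0 (C : Crystal n B) (b : B) : ℕ := sSup {k | iterO C.e0 k b ≠ none}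
noncomputable def phi0 (C : Crystal n B) (b : B) : ℕ := sSup {k | iterO C.f0 k b ≠ none}

/-- The `gl_n`-crystal axioms (S1)-(S2). -/
structure IsGL (C : Crystal n B) : Prop where
  wt_zero : ∀ b i, i = 0 ∨ n < i → C.wt b i = 0
  e_range : ∀ i b, i = 0 ∨ n ≤ i → C.e i b = none
  f_range : ∀ i b, i = 0 ∨ n ≤ i → C.f i b = none
  e_bdd : ∀ i b, ∃ N, iterO (C.e i) N b = none
  f_bdd : ∀ i b, ∃ N, iterO (C.f i) N b = none
  ef_iff : ∀ i, 1 ≤ i → i ≤ n - 1 → ∀ b c, C.e i b = some c ↔ C.f i c = some b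
  e_wt : ∀ i, 1 ≤ i → i ≤ n - 1 → ∀ b c, C.e i b = some c →
    ∀ j, C.wt c j = C.wt b j + (if j = i then 1 else 0) - (if j = i + 1 then 1 else 0)
  string_eq : ∀ i, 1 ≤ i → i ≤ n - 1 → ∀ b,
    (C.phi i b : ℤ) - (C.eps i b : ℤ) = C.wt b i - C.wt b (i + 1)

/-- The `q_n`-crystal axioms (P1)-(P3) on top of the `gl_n` ones. -/
structure IsQ (C : Crystal n B) extends IsGL C : Prop where
  wt_nonneg : ∀ b i, 0 ≤ C.wt b i
  ebar_bdd : ∀ b, ∃ N, iterO C.ebar N b = none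
  fbar_bdd : ∀ b, ∃ N, iterO C.fbar N b = none
  bar_iff : ∀ b c, C.ebar b = some c ↔ C.fbar c = some b
  ebar_wt : 2 ≤ n → ∀ b c, C.ebar b = some c →
    (∀ j, C.wt c j = C.wt b j + (if j = 1 then 1 else 0) - (if j = 2 then 1 else 0)) ∧
    (∀ i, 3 ≤ i → i ≤ n - 1 → C.eps i b = C.eps i c ∧ C.phi i b = C.phi i c)
  bar_comm : 2 ≤ n → ∀ i, 3 ≤ i → i ≤ n - 1 → ∀ b,
    (C.e i b).bind C.ebar = (C.ebar b).bind (C.e i) ∧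
    (C.e i b).bind C.fbar = (C.fbar b).bind (C.e i) ∧
    (C.f i b).bind C.ebar = (C.ebar b).bind (C.f i) ∧
    (C.f i b).bind C.fbar = (C.fbar b).bind (C.f i)
  bar_string : 2 ≤ n → ∀ b,
    C.epsBar b + C.phiBar b = (if C.wt b 1 = 0 ∧ C.wt b 2 = 0 then 0 else 1)
  bar_none : n < 2 → ∀ b, C.ebar b = none ∧ C.fbar b = none

/-- The `q⁺_n`-crystal axioms (Q1)-(Q3) on top of the `q_n` ones. -/
structure IsQPlus (C : Crystal n B) extends IsQ C : Prop where
  e0_bdd : ∀ b, ∃ N, iterO C.e0 N b = none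
  f0_bdd : ∀ b, ∃ N, iterO C.f0 N b = none
  zero_iff : ∀ b c, C.e0 b = some c ↔ C.f0 c = some b
  e0_wt : ∀ b c, C.e0 b = some c →
    (∀ j, C.wt c j = C.wt b j) ∧
    (∀ i, 1 ≤ i → i ≤ n - 1 → C.eps i b = C.eps i c ∧ C.phi i b = C.phi i c) ∧
    (C.epsBar b = C.epsBar c ∧ C.phiBar b = C.phiBar c)
  zero_comm : ∀ i, 2 ≤ i → i ≤ n - 1 → ∀ b,
    (C.e i b).bind C.e0 = (C.e0 b).bind (C.e i) ∧
    (C.e i b).bind C.f0 = (C.f0 b).bind (C.e i) ∧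
    (C.f i b).bind C.e0 = (C.e0 b).bind (C.f i) ∧
    (C.f i b).bind C.f0 = (C.f0 b).bind (C.f i)
  zero_string : ∀ b, C.eps0 b + C.phi0 b = (if C.wt b 1 = 0 then 0 else 1)

/-- The standard `q⁺_n`-crystal `𝔹⁺_n` on letters `(k, primed?)`, `1 ≤ k ≤ n`. -/
def stdC (n : ℕ) : Crystal n Std where
  wt := fun l j => if j = l.1 ∧ 1 ≤ l.1 ∧ l.1 ≤ n then 1 else 0
  e := fun i l => if 1 ≤ i ∧ i ≤ n - 1 ∧ l.1 = i + 1 then some (i, l.2) else none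
  f := fun i l => if 1 ≤ i ∧ i ≤ n - 1 ∧ l.1 = i then some (i + 1, l.2) else none
  ebar := fun l => if 2 ≤ n ∧ l.1 = 2 then some (1, l.2) else none
  fbar := fun l => if 2 ≤ n ∧ l.1 = 1 then some (2, l.2) else none
  e0 := fun l => if 1 ≤ n ∧ l = (1, true) then some (1, false) else none
  f0 := fun l => if 1 ≤ n ∧ l = (1, false) then some (1, true) else none

/-- The one-element crystal of weight `0`. -/
def unitC (n : ℕ) : Crystal n PUnit where
  wt := fun _ _ => 0
  e := fun _ _ => none
  f := fun _ _ => none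
  ebar := fun _ => none
  fbar := fun _ => none
  e0 := fun _ => none
  f0 := fun _ => none

/-- The `q⁺_n`-tensor product of two crystals (anti-Kashiwara convention). -/
noncomputable def tensor (C : Crystal n B) (D : Crystal n B') : Crystal n (B × B') where
  wt := fun x j => C.wt x.1 j + D.wt x.2 j
  e := fun i x =>
    if C.eps i x.1 ≤ D.phi i x.2 then (D.e i x.2).map (fun c => (x.1, c))
    else (C.e i x.1).map (fun b => (b, x.2))
  f := fun i x =>
    if C.eps i x.1 < D.phi i x.2 then (D.f i x.2).map (fun c => (x.1, c))
    else (C.f i x.1).map (fun b => (b, x.2))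
  e0 := fun x =>
    if C.wt x.1 1 ≠ 0 then (C.e0 x.1).map (fun b => (b, x.2))
    else (D.e0 x.2).map (fun c => (x.1, c))
  f0 := fun x =>
    if C.wt x.1 1 ≠ 0 then (C.f0 x.1).map (fun b => (b, x.2))
    else (D.f0 x.2).map (fun c => (x.1, c))
  ebar := fun x =>
    if C.wt x.1 1 = 0 ∧ C.wt x.1 2 = 0 then (D.ebar x.2).map (fun c => (x.1, c))
    else if h : C.wt x.1 1 = 0 ∧ ((C.ebar x.1).bind C.f0).isSome ∧ (D.e0 x.2).isSome then
      some (((C.ebar x.1).bind C.f0).get h.2.1, (D.e0 x.2).get h.2.2)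
    else if h : C.wt x.1 1 = 0 ∧ ((C.ebar x.1).bind C.e0).isSome ∧ (D.f0 x.2).isSome then
      some (((C.ebar x.1).bind C.e0).get h.2.1, (D.f0 x.2).get h.2.2)
    else (C.ebar x.1).map (fun b => (b, x.2))
  fbar := fun x =>
    if C.wt x.1 1 = 0 ∧ C.wt x.1 2 = 0 then (D.fbar x.2).map (fun c => (x.1, c))
    else if h : C.wt x.1 1 = 1 ∧ ((C.f0 x.1).bind C.fbar).isSome ∧ (D.e0 x.2).isSome then
      some (((C.f0 x.1).bind C.fbar).get h.2.1, (D.e0 x.2).get h.2.2)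
    else if h : C.wt x.1 1 = 1 ∧ ((C.e0 x.1).bind C.fbar).isSome ∧ (D.f0 x.2).isSome then
      some (((C.e0 x.1).bind C.fbar).get h.2.1, (D.f0 x.2).get h.2.2)
    else (C.fbar x.1).map (fun b => (b, x.2))

/-- Underlying type of the `m`-th tensor power of the standard crystal. -/
def PowT : ℕ → Type
  | 0 => PUnit
  | m + 1 => PowT m × Std

/-- The `m`-th `q⁺_n`-tensor power `(𝔹⁺_n)^{⊗m}`. -/
noncomputable def powC (n : ℕ) : (m : ℕ) → Crystal n (PowT m)
  | 0 => unitC n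
  | m + 1 => tensor (powC n m) (stdC n)

/-- One edge of the crystal graph. -/
def step (C : Crystal n B) (b c : B) : Prop :=
  (∃ i, C.f i b = some c) ∨ C.fbar b = some c ∨ C.f0 b = some c

/-- Weak connectivity in the crystal graph. -/
def joined (C : Crystal n B) : B → B → Prop :=
  Relation.ReflTransGen (fun b c => step C b c ∨ step C c b)

/-- Weakly connected component (full subcrystal) through `b`. -/
def component (C : Crystal n B) (b : B) : Set B := {c | joined C b c}

def mapsAgree (C : Crystal n B) (D : Crystal n B') (φ : B → B') (x : B) : Prop :=
  (∀ j, D.wt (φ x) j = C.wt x j) ∧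
  (∀ i, (C.e i x).map φ = D.e i (φ x)) ∧
  (∀ i, (C.f i x).map φ = D.f i (φ x)) ∧
  ((C.ebar x).map φ = D.ebar (φ x)) ∧
  ((C.fbar x).map φ = D.fbar (φ x)) ∧
  ((C.e0 x).map φ = D.e0 (φ x)) ∧
  ((C.f0 x).map φ = D.f0 (φ x))

/-- `S ⊆ B` and `T ⊆ B'` are isomorphic as (sub)crystals. -/
def IsIsoOn (C : Crystal n B) (D : Crystal n B') (S : Set B) (T : Set B') : Prop :=
  ∃ φ : B → B', Set.BijOn φ S T ∧ ∀ x ∈ S, mapsAgree C D φ x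

/-- `φ` is an isomorphism of crystals. -/
def IsIso (C : Crystal n B) (D : Crystal n B') (φ : B → B') : Prop :=
  Function.Bijective φ ∧ ∀ x, mapsAgree C D φ x

/-- A quasi-isomorphism of crystals: restricts to an isomorphism on every full subcrystal. -/
def IsQuasiIso (C : Crystal n B) (D : Crystal n B') (ψ : B → B') : Prop :=
  ∀ b : B, ψ '' component C b = component D (ψ b) ∧
    Set.InjOn ψ (component C b) ∧
    ∀ x ∈ component C b, mapsAgree C D ψ x

/-- Normality for `q⁺_n`-crystals. -/
def IsNormal (C : Crystal n B) : Prop :=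
  IsQPlus C ∧ ∀ b : B, ∃ (m : ℕ) (x : PowT m),
    IsIsoOn C (powC n m) (component C b) (component (powC n m) x)

/-- The string-reversing involution `σ_i` from equation (3.3). -/
noncomputable def sigma (C : Crystal n B) (i : ℕ) (b : B) : B :=
  if C.eps i b ≤ C.phi i b then (iterO (C.f i) (C.phi i b - C.eps i b) b).getD b
  else (iterO (C.e i) (C.eps i b - C.phi i b) b).getD b

/-- The involution `σ_0`. -/
noncomputable def sigma0 (C : Crystal n B) (b : B) : B :=
  (C.e0 b).getD ((C.f0 b).getD b)

/-- `σ_k ⋯ σ_2 σ_1` (applying `σ_1` first). -/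
noncomputable def sigmaDown (C : Crystal n B) : ℕ → B → B
  | 0 => id
  | k + 1 => fun b => C.sigma (k + 1) (C.sigmaDown k b)

/-- `σ_1 σ_2 ⋯ σ_k` (applying `σ_k` first). -/
noncomputable def sigmaUp (C : Crystal n B) : ℕ → B → B
  | 0 => id
  | k + 1 => fun b => C.sigmaUp k (C.sigma (k + 1) b)

noncomputable def sigmaW0Aux (C : Crystal n B) : ℕ → B → B
  | 0 => id
  | k + 1 => fun b => C.sigmaW0Aux k (C.sigmaDown (k + 1) b)

/-- `σ_{w_0} = (σ_1)(σ_2σ_1)⋯(σ_{n-1}⋯σ_2σ_1)`. -/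
noncomputable def sigmaW0 (C : Crystal n B) : B → B := C.sigmaW0Aux (n - 1)

noncomputable def sigmaW0InvAux (C : Crystal n B) : ℕ → B → B
  | 0 => id
  | k + 1 => fun b => C.sigmaUp (k + 1) (C.sigmaW0InvAux k b)

/-- The inverse `σ_{w_0}^{-1}`. -/
noncomputable def sigmaW0Inv (C : Crystal n B) : B → B := C.sigmaW0InvAux (n - 1)

/-- `σ_k ⋯ σ_1 σ_0` (applying `σ_0` first). -/
noncomputable def sigmaDown0 (C : Crystal n B) : ℕ → B → B
  | 0 => C.sigma0
  | k + 1 => fun b => C.sigma (k + 1) (C.sigmaDown0 k b)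

noncomputable def sigmaW0PlusAux (C : Crystal n B) : ℕ → B → B
  | 0 => id
  | k + 1 => fun b => C.sigmaW0PlusAux k (C.sigmaDown0 k b)

/-- `σ_{w_0^+} = (σ_0)(σ_1σ_0)(σ_2σ_1σ_0)⋯(σ_{n-1}⋯σ_1σ_0)`. -/
noncomputable def sigmaW0Plus (C : Crystal n B) : B → B := C.sigmaW0PlusAux n

/-- The operators `e_{ī}` for `1 ≤ i ≤ n-1`, with `e_{1̄} = ebar` and
`e_{ī} = σ_{i-1} σ_i e_{\overline{i-1}} σ_i σ_{i-1}`. -/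
noncomputable def eBarIdx (C : Crystal n B) : ℕ → B → Option B
  | 0, _ => none
  | 1, b => C.ebar b
  | k + 2, b =>
    (C.eBarIdx (k + 1) (C.sigma (k + 2) (C.sigma (k + 1) b))).map
      (fun c => C.sigma (k + 1) (C.sigma (k + 2) c))

/-- The operators `f_{ī}`. -/
noncomputable def fBarIdx (C : Crystal n B) : ℕ → B → Option B
  | 0, _ => none
  | 1, b => C.fbar b
  | k + 2, b =>
    (C.fBarIdx (k + 1) (C.sigma (k + 2) (C.sigma (k + 1) b))).map
      (fun c => C.sigma (k + 1) (C.sigma (k + 2) c))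

/-- `e_{ī′} = σ_{w_0} f_{\overline{n-i}} σ_{w_0}^{-1}`. -/
noncomputable def eBarPrime (C : Crystal n B) (i : ℕ) (b : B) : Option B :=
  (C.fBarIdx (n - i) (C.sigmaW0Inv b)).map C.sigmaW0

/-- `f_{ī′} = σ_{w_0} e_{\overline{n-i}} σ_{w_0}^{-1}`. -/
noncomputable def fBarPrime (C : Crystal n B) (i : ℕ) (b : B) : Option B :=
  (C.eBarIdx (n - i) (C.sigmaW0Inv b)).map C.sigmaW0

/-- `e_0^{[i]} = σ_{i-1} ⋯ σ_1 e_0 σ_1 ⋯ σ_{i-1}`. -/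
noncomputable def e0Idx (C : Crystal n B) (i : ℕ) (b : B) : Option B :=
  (C.e0 (C.sigmaUp (i - 1) b)).map (C.sigmaDown (i - 1))

/-- `f_0^{[i]} = σ_{i-1} ⋯ σ_1 f_0 σ_1 ⋯ σ_{i-1}`. -/
noncomputable def f0Idx (C : Crystal n B) (i : ℕ) (b : B) : Option B :=
  (C.f0 (C.sigmaUp (i - 1) b)).map (C.sigmaDown (i - 1))

def IsGLHighest (C : Crystal n B) (b : B) : Prop :=
  ∀ i, 1 ≤ i → i ≤ n - 1 → C.e i b = none

def IsGLLowest (C : Crystal n B) (b : B) : Prop :=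
  ∀ i, 1 ≤ i → i ≤ n - 1 → C.f i b = none

def IsQHighest (C : Crystal n B) (b : B) : Prop :=
  IsGLHighest C b ∧ ∀ i, 1 ≤ i → i ≤ n - 1 → C.eBarIdx i b = none

def IsQLowest (C : Crystal n B) (b : B) : Prop :=
  IsGLLowest C b ∧ ∀ i, 1 ≤ i → i ≤ n - 1 → C.fBarPrime i b = none

def IsQPlusHighest (C : Crystal n B) (b : B) : Prop :=
  IsQHighest C b ∧ ∀ i, 1 ≤ i → i ≤ n → C.e0Idx i b = none

def IsQPlusLowest (C : Crystal n B) (b : B) : Prop :=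
  IsQLowest C b ∧ ∀ i, 1 ≤ i → i ≤ n → C.f0Idx i b = none

/-! ### `gl_n`-specific notions (ignoring the barred and `0` operators) -/

def glStep (C : Crystal n B) (b c : B) : Prop := ∃ i, C.f i b = some c

def glJoined (C : Crystal n B) : B → B → Prop :=
  Relation.ReflTransGen (fun b c => glStep C b c ∨ glStep C c b)

def glComponent (C : Crystal n B) (b : B) : Set B := {c | glJoined C b c}

def glMapsAgree (C : Crystal n B) (D : Crystal n B') (φ : B → B') (x : B) : Prop :=
  (∀ j, D.wt (φ x) j = C.wt x j) ∧
  (∀ i, (C.e i x).map φ = D.e i (φ x)) ∧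
  (∀ i, (C.f i x).map φ = D.f i (φ x))

def IsGLIsoOn (C : Crystal n B) (D : Crystal n B') (S : Set B) (T : Set B') : Prop :=
  ∃ φ : B → B', Set.BijOn φ S T ∧ ∀ x ∈ S, glMapsAgree C D φ x

/-- The standard `gl_n`-crystal `𝔹_n` on the letters `1,…,n`. -/
def stdGLC (n : ℕ) : Crystal n ℕ where
  wt := fun l j => if j = l ∧ 1 ≤ l ∧ l ≤ n then 1 else 0
  e := fun i l => if 1 ≤ i ∧ i ≤ n - 1 ∧ l = i + 1 then some i else none
  f := fun i l => if 1 ≤ i ∧ i ≤ n - 1 ∧ l = i then some (i + 1) else none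
  ebar := fun _ => none
  fbar := fun _ => none
  e0 := fun _ => none
  f0 := fun _ => none

def GLPowT : ℕ → Type
  | 0 => PUnit
  | m + 1 => GLPowT m × ℕ

noncomputable def glPowC (n : ℕ) : (m : ℕ) → Crystal n (GLPowT m)
  | 0 => unitC n
  | m + 1 => tensor (glPowC n m) (stdGLC n)

/-- Normality for `gl_n`-crystals. -/
def IsGLNormal (C : Crystal n B) : Prop :=
  IsGL C ∧ ∀ b : B, ∃ (m : ℕ) (x : GLPowT m),
    IsGLIsoOn C (glPowC n m) (glComponent C b) (glComponent (glPowC n m) x)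

end Crystal

open Crystal

/-- Character of a finite crystal, as a polynomial in `x_1,…,x_n`. -/
noncomputable def char {n : ℕ} {B : Type} [Fintype B] (C : Crystal n B) :
    MvPolynomial (Fin n) ℤ :=
  ∑ b : B, ∏ i : Fin n, MvPolynomial.X i ^ (C.wt b ((i : ℕ) + 1)).toNat

-- Restriction of a partial operator to a subtype.
open Classical in
noncomputable def restrictP {α : Type} (P : α → Prop) (g : α → Option α) (x : Subtype P) :
    Option (Subtype P) :=
  (g x.1).bind (fun y => if h : P y then some ⟨y, h⟩ else none)

/-! ### The crystal of words `W⁺_n(m)` -/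

/-- `i`-unpaired indices (0-based) of a word, via the parenthesis matching where letters
with value `i` are `)` and letters with value `i+1` are `(`. -/
def wUnpaired (i : ℕ) (w : List (ℕ × Bool)) : List ℕ :=
  let r := ((List.range w.length).zip w).foldl (fun (st : List ℕ × List ℕ) p =>
    if p.2.1 = i + 1 then (p.1 :: st.1, st.2)
    else if p.2.1 = i then
      match st.1 with
      | _o :: os => (os, st.2)
      | [] => (st.1, p.1 :: st.2)
    else st) ([], [])
  r.2.reverse ++ r.1.reverse

def wordF (n i : ℕ) (w : List (ℕ × Bool)) : Option (List (ℕ × Bool)) :=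
  if 1 ≤ i ∧ i ≤ n - 1 then
    match ((wUnpaired i w).filter (fun j => (w.getD j default).1 == i)).getLast? with
    | none => none
    | some j => some (w.set j (i + 1, (w.getD j default).2))
  else none

def wordE (n i : ℕ) (w : List (ℕ × Bool)) : Option (List (ℕ × Bool)) :=
  if 1 ≤ i ∧ i ≤ n - 1 then
    match ((wUnpaired i w).filter (fun j => (w.getD j default).1 == i + 1)).head? with
    | none => none
    | some j => some (w.set j (i, (w.getD j default).2))
  else none

def wordFbar (n : ℕ) (w : List (ℕ × Bool)) : Option (List (ℕ × Bool)) :=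
  if 2 ≤ n then
    match w.findIdx? (fun l => l.1 == 1) with
    | none => none
    | some j =>
      if (w.take j).any (fun l => l.1 == 2) then none
      else
        match (w.drop (j + 1)).findIdx? (fun l => l.1 == 1) with
        | none => some (w.set j (2, (w.getD j default).2))
        | some k' =>
          let k := j + 1 + k'
          let a := w.getD j default
          let b := w.getD k default
          if a.2 = b.2 then some (w.set j (2, a.2))
          else if a.2 = false then some ((w.set j (2, true)).set k (1, false))
          else some ((w.set j (2, false)).set k (1, true))
  else none

def wordEbar (n : ℕ) (w : List (ℕ × Bool)) : Option (List (ℕ × Bool)) :=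
  if 2 ≤ n then
    match w.findIdx? (fun l => l.1 == 2) with
    | none => none
    | some j =>
      if (w.take j).any (fun l => l.1 == 1) then none
      else
        match (w.drop (j + 1)).findIdx? (fun l => l.1 == 1) with
        | none => some (w.set j (1, (w.getD j default).2))
        | some k' =>
          let k := j + 1 + k'
          let a := w.getD j default
          let b := w.getD k default
          if a.2 = b.2 then some (w.set j (1, a.2))
          else if a.2 = true then some ((w.set j (1, false)).set k (1, true))
          else some ((w.set j (1, true)).set k (1, false))
  else none

def wordF0 (w : List (ℕ × Bool)) : Option (List (ℕ × Bool)) :=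
  match w.findIdx? (fun l => l.1 == 1) with
  | some j => if (w.getD j default).2 = false then some (w.set j (1, true)) else none
  | none => none

def wordE0 (w : List (ℕ × Bool)) : Option (List (ℕ × Bool)) :=
  match w.findIdx? (fun l => l.1 == 1) with
  | some j => if (w.getD j default).2 = true then some (w.set j (1, false)) else none
  | none => none

/-- Membership in `W⁺_n(m)`. -/
def WordP (n m : ℕ) (w : List (ℕ × Bool)) : Prop :=
  w.length = m ∧ ∀ l ∈ w, 1 ≤ l.1 ∧ l.1 ≤ n

/-- The `q⁺_n`-crystal of words `W⁺_n(m)`. -/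
noncomputable def wordC (n m : ℕ) : Crystal n (Subtype (WordP n m)) where
  wt := fun w k =>
    if 1 ≤ k ∧ k ≤ n then ((w.1.filter (fun l => l.1 == k)).length : ℤ) else 0
  e := fun i => restrictP _ (wordE n i)
  f := fun i => restrictP _ (wordF n i)
  ebar := restrictP _ (wordEbar n)
  fbar := restrictP _ (wordFbar n)
  e0 := restrictP _ wordE0
  f0 := restrictP _ wordF0

/-- Interpret a word as an element of `(𝔹⁺_n)^{⊗m}`. -/
def toPow : (m : ℕ) → List (ℕ × Bool) → PowT m
  | 0, _ => PUnit.unit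
  | m + 1, w => (toPow m w.dropLast, w.getLast?.getD (0, false))


/-! ### Involution words and increasing factorizations -/

/-- One step of the Demazure product. -/
def demStep (π : Equiv.Perm ℤ) (i : ℤ) : Equiv.Perm ℤ :=
  if π (i + 1) < π i then π else π * Equiv.swap i (i + 1)

/-- Demazure product `1 ∘ s_{a_1} ∘ ⋯ ∘ s_{a_m}`. -/
def dem (w : List ℤ) : Equiv.Perm ℤ := w.foldl demStep 1

/-- `s_{a_m} ∘ ⋯ ∘ s_{a_1} ∘ 1 ∘ s_{a_1} ∘ ⋯ ∘ s_{a_m}`. -/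
def invEnd (w : List ℤ) : Equiv.Perm ℤ := dem (w.reverse ++ w)

/-- `w` is an involution word for `z`. -/
def IsInvWord (z : Equiv.Perm ℤ) (w : List ℤ) : Prop :=
  invEnd w = z ∧ ∀ v : List ℤ, invEnd v = z → w.length ≤ v.length

/-- The (0-based) index `j` is a commutation of the involution word `w`. -/
def IsCommutation (w : List ℤ) (j : ℕ) : Prop :=
  invEnd (w.take j) (w.getD j 0) = w.getD j 0 ∧
  invEnd (w.take j) (w.getD j 0 + 1) = w.getD j 0 + 1

/-- Remove primes from a primed word. -/
def unpr (w : List PLetter) : List ℤ := w.map Prod.fst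

/-- `w` is a primed involution word for `z`. -/
def IsPrimedInvWord (z : Equiv.Perm ℤ) (w : List PLetter) : Prop :=
  IsInvWord z (unpr w) ∧
  ∀ j, j < w.length → (w.getD j default).2 = true → IsCommutation (unpr w) j

/-- Value of a primed letter, doubled: `i ↦ 2i`, `i′ ↦ 2i - 1`. -/
def pvZ (l : PLetter) : ℤ := 2 * l.1 - (if l.2 then 1 else 0)

def StrictIncrW (w : List PLetter) : Prop := List.Chain' (· < ·) (w.map pvZ)

/-- Concatenation `a¹a²⋯aⁿ` of a tuple of primed words. -/
def concatT {n : ℕ} (a : Fin n → List PLetter) : List PLetter := (List.ofFn a).flatten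

/-- Membership in `Incr⁺_n(z)`. -/
def IncrP (n : ℕ) (z : Equiv.Perm ℤ) (a : Fin n → List PLetter) : Prop :=
  (∀ i, StrictIncrW (a i)) ∧ IsPrimedInvWord z (concatT a)

/-- Letters of `v` left unpaired by the pairing of Definition 5.5. -/
def pairAvail (v w : List PLetter) : List PLetter :=
  w.reverse.foldl (fun avail wj =>
    match avail.find? (fun x => decide (wj.1 < x.1)) with
    | some x => avail.erase x
    | none => avail) v

/-- Letters of `w` left unpaired by the pairing of Definition 5.5 (in increasing order). -/
def unpairedSnd (v w : List PLetter) : List PLetter :=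
  (w.reverse.foldl (fun (st : List PLetter × List PLetter) wj =>
    match st.1.find? (fun x => decide (wj.1 < x.1)) with
    | some x => (st.1.erase x, st.2)
    | none => (st.1, wj :: st.2)) (v, [])).2

def smallestAbsentAux : ℕ → ℤ → List ℤ → ℤ
  | 0, y, _ => y
  | fuel + 1, y, s => if y ∈ s then smallestAbsentAux fuel (y + 1) s else y

/-- The smallest integer `≥ y` not occurring in `s`. -/
def smallestAbsent (y : ℤ) (s : List ℤ) : ℤ := smallestAbsentAux (s.length + 1) y s

def largestAbsentAux : ℕ → ℤ → List ℤ → ℤ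
  | 0, y, _ => y
  | fuel + 1, y, s => if y ∈ s then largestAbsentAux fuel (y - 1) s else y

/-- The largest integer `≤ y` not occurring in `s`. -/
def largestAbsent (y : ℤ) (s : List ℤ) : ℤ := largestAbsentAux (s.length + 1) y s

/-- Ordered insertion of a primed letter into a strictly increasing primed word. -/
def insLetter : PLetter → List PLetter → List PLetter
  | l, [] => [l]
  | l, x :: xs => if pvZ l ≤ pvZ x then l :: x :: xs else x :: insLetter l xs

/-- Prime adjustment in case (L2) of Definition 5.6. -/
def adjustF (x y : ℤ) (p : List PLetter × List PLetter) : List PLetter × List PLetter :=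
  (List.range (y - x).toNat).foldl (fun q k =>
    let t : ℤ := x + k
    if ((t + 1, false) : PLetter) ∈ q.1 ∧ ((t, true) : PLetter) ∈ q.2 then
      (q.1.map (fun l => if l = ((t + 1, false) : PLetter) then (t + 1, true) else l),
       q.2.map (fun l => if l = ((t, true) : PLetter) then (t, false) else l))
    else q) p

/-- Prime adjustment in case (R2) of Definition 5.7. -/
def adjustE (x y : ℤ) (p : List PLetter × List PLetter) : List PLetter × List PLetter :=
  (List.range (y - x).toNat).foldl (fun q k =>
    let t : ℤ := x + k
    if ((t + 1, true) : PLetter) ∈ q.1 ∧ ((t, false) : PLetter) ∈ q.2 then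
      (q.1.map (fun l => if l = ((t + 1, true) : PLetter) then (t + 1, false) else l),
       q.2.map (fun l => if l = ((t, false) : PLetter) then (t, true) else l))
    else q) p

def upd2 {n : ℕ} (a : Fin n → List PLetter) (i : Fin n) (v : List PLetter)
    (j : Fin n) (w : List PLetter) : Fin n → List PLetter :=
  Function.update (Function.update a i v) j w

/-- The lowering operator `f_i` on increasing factorizations (Definition 5.6). -/
def rawIncrF (n i : ℕ) (a : Fin n → List PLetter) : Option (Fin n → List PLetter) :=
  if h : 1 ≤ i ∧ i ≤ n - 1 then
    let i1 : Fin n := ⟨i - 1, by omega⟩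
    let i2 : Fin n := ⟨i, by omega⟩
    let v := a i1
    let w := a i2
    match (pairAvail v w).getLast? with
    | none => none
    | some x =>
      let y := smallestAbsent x.1 (unpr w)
      if x.2 then
        some (upd2 a i1 (v.erase x) i2 (insLetter (y, true) w))
      else
        let p := adjustF x.1 y (v.erase x, insLetter (y, false) w)
        some (upd2 a i1 p.1 i2 p.2)
  else none

/-- The raising operator `e_i` on increasing factorizations (Definition 5.7). -/
def rawIncrE (n i : ℕ) (a : Fin n → List PLetter) : Option (Fin n → List PLetter) :=
  if h : 1 ≤ i ∧ i ≤ n - 1 then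
    let i1 : Fin n := ⟨i - 1, by omega⟩
    let i2 : Fin n := ⟨i, by omega⟩
    let v := a i1
    let w := a i2
    match (unpairedSnd v w).getLast? with
    | none => none
    | some y =>
      let x := largestAbsent y.1 (unpr v)
      if y.2 then
        some (upd2 a i1 (insLetter (x, true) v) i2 (w.erase y))
      else
        let p := adjustE x y.1 (insLetter (x, false) v, w.erase y)
        some (upd2 a i1 p.1 i2 p.2)
  else none

/-- The lowering operator `f_1̄` on increasing factorizations (Definition 5.8). -/
def rawIncrFbar (n : ℕ) (a : Fin n → List PLetter) : Option (Fin n → List PLetter) :=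
  if h : 2 ≤ n then
    let i1 : Fin n := ⟨0, by omega⟩
    let i2 : Fin n := ⟨1, by omega⟩
    match a i1 with
    | [] => none
    | l :: rest =>
      if (a i2).all (fun m => decide (pvZ l < pvZ m)) then
        match rest with
        | r :: rs =>
          if l.2 ≠ r.2 then
            some (upd2 a i1 ((r.1, !r.2) :: rs) i2 ((l.1, !l.2) :: a i2))
          else some (upd2 a i1 rest i2 (l :: a i2))
        | [] => some (upd2 a i1 [] i2 (l :: a i2))
      else none
  else none

/-- The raising operator `e_1̄` on increasing factorizations (Definition 5.9). -/
def rawIncrEbar (n : ℕ) (a : Fin n → List PLetter) : Option (Fin n → List PLetter) :=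
  if h : 2 ≤ n then
    let i1 : Fin n := ⟨0, by omega⟩
    let i2 : Fin n := ⟨1, by omega⟩
    match a i2 with
    | [] => none
    | l :: rest2 =>
      if (a i1).all (fun m => decide (pvZ l < pvZ m)) then
        match a i1 with
        | r :: rs =>
          if l.2 ≠ r.2 then
            some (upd2 a i1 ((l.1, !l.2) :: (r.1, !r.2) :: rs) i2 rest2)
          else some (upd2 a i1 (l :: a i1) i2 rest2)
        | [] => some (upd2 a i1 [l] i2 rest2)
      else none
  else none

/-- The operator `f_0` on increasing factorizations (Definition 5.10). -/
def rawIncrF0 (n : ℕ) (a : Fin n → List PLetter) : Option (Fin n → List PLetter) :=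
  if h : 1 ≤ n then
    let i1 : Fin n := ⟨0, by omega⟩
    match a i1 with
    | [] => none
    | l :: rest =>
      if l.2 = false then some (Function.update a i1 ((l.1, true) :: rest)) else none
  else none

/-- The operator `e_0` on increasing factorizations (Definition 5.10). -/
def rawIncrE0 (n : ℕ) (a : Fin n → List PLetter) : Option (Fin n → List PLetter) :=
  if h : 1 ≤ n then
    let i1 : Fin n := ⟨0, by omega⟩
    match a i1 with
    | [] => none
    | l :: rest =>
      if l.2 = true then some (Function.update a i1 ((l.1, false) :: rest)) else none
  else none

/-- The `q⁺_n`-crystal `Incr⁺_n(z)`. -/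
noncomputable def incrC (n : ℕ) (z : Equiv.Perm ℤ) : Crystal n (Subtype (IncrP n z)) where
  wt := fun a k => if h : 1 ≤ k ∧ k ≤ n then ((a.1 ⟨k - 1, by omega⟩).length : ℤ) else 0
  e := fun i => restrictP _ (rawIncrE n i)
  f := fun i => restrictP _ (rawIncrF n i)
  ebar := restrictP _ (rawIncrEbar n)
  fbar := restrictP _ (rawIncrFbar n)
  e0 := restrictP _ (rawIncrE0 n)
  f0 := restrictP _ (rawIncrF0 n)


/-! ### Coxeter-Knuth operators, marked cycles, descents -/

/-- The action of `ock` on a 3-letter window. -/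
def ockTriple (a b c : PLetter) : PLetter × PLetter × PLetter :=
  if a.1 = c.1 ∧ (b.1 = a.1 + 1 ∨ b.1 + 1 = a.1) ∧ b.2 = false ∧ ¬(a.2 = true ∧ c.2 = true) then
    ((b.1, c.2), (a.1, false), (b.1, a.2))
  else if (a.1 < c.1 ∧ c.1 < b.1) ∨ (b.1 < c.1 ∧ c.1 < a.1) then (b, a, c)
  else if (c.1 < a.1 ∧ a.1 < b.1) ∨ (b.1 < a.1 ∧ a.1 < c.1) then (a, c, b)
  else (a, b, c)

/-- The orthogonal Coxeter-Knuth operator `ock_i` (with 1-based window positions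
`i, i+1, i+2` for `i ≥ 1`, and the initial-2-letter rule for `i = 0`). -/
def ock (i : ℕ) (w : List PLetter) : List PLetter :=
  if i = 0 then
    match w with
    | x :: y :: rest => (y.1, x.2) :: (x.1, y.2) :: rest
    | _ => w
  else if i + 2 ≤ w.length then
    let a := w.getD (i - 1) default
    let b := w.getD i default
    let c := w.getD (i + 1) default
    let t := ockTriple a b c
    w.take (i - 1) ++ [t.1, t.2.1, t.2.2] ++ w.drop (i + 2)
  else w

/-- The cycle `γ_j(w) = s_{w_m} ⋯ s_{w_{j+2}} s_{w_{j+1}} ({w_j, w_j + 1})` (0-based `j`). -/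
def gammaCyc (w : List ℤ) (j : ℕ) : Set ℤ :=
  let P : Equiv.Perm ℤ := (((w.drop (j + 1)).reverse).map (fun t => Equiv.swap t (t + 1))).prod
  {P (w.getD j 0), P (w.getD j 0 + 1)}

/-- The set of marked cycles of a primed involution word. -/
def markedOf (w : List PLetter) : Set (Set ℤ) :=
  {S | ∃ j, j < w.length ∧ (w.getD j default).2 = true ∧ S = gammaCyc (unpr w) j}

/-- Descent set of a primed word (1-based positions). -/
def DesSet (w : List PLetter) : Set ℕ :=
  {i | 1 ≤ i ∧ i + 1 ≤ w.length ∧ pvZ (w.getD i default) < pvZ (w.getD (i - 1) default)}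

/-! ### Unprimed pairing and reduced words (Lemmas 5.3 and 5.6) -/

/-- Letters of `v` left unpaired by the pairing of Definition 5.5, unprimed version. -/
def pairAvailZ (v w : List ℤ) : List ℤ :=
  w.reverse.foldl (fun avail wj =>
    match avail.find? (fun x => decide (wj < x)) with
    | some x => avail.erase x
    | none => avail) v

/-- The permutation `s_{a_1} s_{a_2} ⋯ s_{a_m}`. -/
def permOf (w : List ℤ) : Equiv.Perm ℤ := (w.map (fun i => Equiv.swap i (i + 1))).prod

/-- `w` is a reduced word (for some element of `S_ℤ`). -/
def IsReducedWord (w : List ℤ) : Prop :=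
  ∀ v : List ℤ, permOf v = permOf w → w.length ≤ v.length

/-- Ordered insertion of an integer into a strictly increasing integer word. -/
def insLetterZ : ℤ → List ℤ → List ℤ
  | x, [] => [x]
  | x, y :: ys => if x ≤ y then x :: y :: ys else y :: insLetterZ x ys


/-! ### Semistandard shifted tableaux and their crystal operators -/

/-- Doubled value of a tableau letter: `k ↦ 2k`, `k′ ↦ 2k - 1`. -/
def pvN (l : NLet) : ℤ := 2 * (l.1 : ℤ) - (if l.2 then 1 else 0)

/-- `lam` is a strict partition with at most `n` parts (coordinates `1,…,n`). -/
def IsStrictPart (n : ℕ) (lam : ℕ → ℕ) : Prop :=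
  (∀ i, i = 0 ∨ n < i → lam i = 0) ∧
  (∀ i, 1 ≤ i → (lam (i + 1) < lam i ∨ (lam i = 0 ∧ lam (i + 1) = 0)))

/-- Membership of a (1-based) box in the shifted diagram of `lam`. -/
abbrev InSD (lam : ℕ → ℕ) (p : ℕ × ℕ) : Prop :=
  1 ≤ p.1 ∧ p.1 ≤ p.2 ∧ p.2 < p.1 + lam p.1

/-- `T` is a semistandard shifted tableau of shape `lam` with entries at most `n`. -/
def IsShTab (n : ℕ) (lam : ℕ → ℕ) (T : Tab) : Prop :=
  (∀ p : ℕ × ℕ, (T p).isSome ↔ InSD lam p) ∧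
  (∀ p v, T p = some v → 1 ≤ v.1 ∧ v.1 ≤ n) ∧
  (∀ i j v w, T (i, j) = some v → T (i, j + 1) = some w →
    pvN v ≤ pvN w ∧ (pvN v = pvN w → v.2 = false)) ∧
  (∀ i j v w, T (i, j) = some v → T (i + 1, j) = some w →
    pvN v ≤ pvN w ∧ (pvN v = pvN w → v.2 = true))

def setE (T : Tab) (q : ℕ × ℕ) (l : NLet) : Tab := fun p => if p = q then some l else T p

def ceilIs (T : Tab) (q : ℕ × ℕ) (v : ℕ) : Bool :=
  match T q with
  | some l => l.1 == v
  | none => false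

/-- Boxes of `T` with entries in `{i′, i, (i+1)′, i+1}`, in shifted reading order. -/
def readBoxes (T : Tab) (i bnd : ℕ) : List (ℕ × ℕ) :=
  ((List.range bnd).reverse.map (fun k0 =>
    let k := k0 + 1
    ((List.range bnd).filterMap (fun r0 =>
      let r := r0 + 1
      match T (r, k) with
      | some (v, true) => if v = i ∨ v = i + 1 then some ((r, k) : ℕ × ℕ) else none
      | _ => none)) ++
    ((List.range bnd).filterMap (fun c0 =>
      let c := c0 + 1
      match T (k, c) with
      | some (v, false) => if v = i ∨ v = i + 1 then some ((k, c) : ℕ × ℕ) else none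
      | _ => none)))).flatten

/-- Unpaired boxes after the parenthesis matching (entries `i` are `)`, `i+1` are `(`). -/
def bracketBoxes (T : Tab) (i : ℕ) (l : List (ℕ × ℕ)) : List (ℕ × ℕ) :=
  let r := l.foldl (fun (st : List (ℕ × ℕ) × List (ℕ × ℕ)) q =>
    if ceilIs T q (i + 1) then (q :: st.1, st.2)
    else
      match st.1 with
      | _o :: os => (os, st.2)
      | [] => (st.1, q :: st.2)) ([], [])
  r.2.reverse ++ r.1.reverse

/-- Most-northwest box of the ribbon (within `inSet`) containing the given box. -/
def nwEnd (inSet : ℕ × ℕ → Bool) : ℕ → ℕ × ℕ → ℕ × ℕ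
  | 0, p => p
  | fuel + 1, p =>
    if inSet (p.1 + 1, p.2) = true then nwEnd inSet fuel (p.1 + 1, p.2)
    else if 1 ≤ p.2 ∧ inSet (p.1, p.2 - 1) = true then nwEnd inSet fuel (p.1, p.2 - 1)
    else p

/-- Walk southeast through a ribbon looking for the first box satisfying `pred`. -/
def seFind (inSet pred : ℕ × ℕ → Bool) : ℕ → ℕ × ℕ → Option (ℕ × ℕ)
  | 0, _ => none
  | fuel + 1, p =>
    if pred p = true then some p
    else if 2 ≤ p.1 ∧ inSet (p.1 - 1, p.2) = true then seFind inSet pred fuel (p.1 - 1, p.2)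
    else if inSet (p.1, p.2 + 1) = true then seFind inSet pred fuel (p.1, p.2 + 1)
    else none

/-- Interchange the primes on the entries in boxes `p` and `q`. -/
def swapPr (T : Tab) (p q : ℕ × ℕ) : Tab :=
  match T p, T q with
  | some a, some b => if a.2 ≠ b.2 then setE (setE T p (a.1, b.2)) q (b.1, a.2) else T
  | _, _ => T

/-- The lowering operator `f_i` on shifted tableaux (Definition 6.4). -/
def tabF (n bnd i : ℕ) (T : Tab) : Option Tab :=
  if 1 ≤ i ∧ i ≤ n - 1 then
    match ((bracketBoxes T i (readBoxes T i bnd)).filter (fun q => ceilIs T q i)).getLast? with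
    | none => none
    | some q =>
      let x := q.1
      let y := q.2
      match T q with
      | some (_, false) =>
        if T (x, y + 1) = some (i + 1, true) then
          some (setE (setE T q (i + 1, true)) (x, y + 1) (i + 1, false))
        else if ¬(ceilIs T (x + 1, y) (i + 1) = true) then
          some (setE T q (i + 1, false))
        else
          let nw := nwEnd (fun r => ceilIs T r (i + 1)) (2 * bnd + 2) (x + 1, y)
          if nw.1 ≠ nw.2 then
            some (setE (setE T q (i + 1, true)) nw (i + 1, false))
          else
            some (swapPr (setE T q (i + 1, true)) (nw.1, nw.1) (nw.1 - 1, nw.1 - 1))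
      | some (_, true) =>
        if T (x + 1, y) = some (i, false) then
          some (setE (setE T q (i, false)) (x + 1, y) (i + 1, true))
        else if ¬(T (x, y + 1) = some (i, false) ∨ T (x, y + 1) = some (i + 1, true)) then
          some (setE T q (i + 1, true))
        else
          match seFind (fun r => ceilIs T r i)
              (fun r => decide (T r = some (i, false) ∧
                ¬(T (r.1, r.2 + 1) = some (i, false) ∨ T (r.1, r.2 + 1) = some (i + 1, true))))
              (2 * bnd + 2) q with
          | some r => some (setE (setE T q (i, false)) r (i + 1, true))
          | none => none
      | none => none
  else none

/-- The lowering operator `f_1̄` on shifted tableaux (Definition 6.7). -/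
def tabFbar (n bnd : ℕ) (T : Tab) : Option Tab :=
  if 2 ≤ n then
    let row1 : List (ℕ × ℕ) := (List.range bnd).map (fun c => (1, c + 1))
    if row1.any (fun q => decide (T q = some (2, true))) then none
    else
      match (row1.filter (fun q => ceilIs T q 1)).getLast? with
      | none => none
      | some q =>
        if q.1 = q.2 ∧ T q = some (1, false) then some (setE T q (2, false))
        else some (setE T q (2, true))
  else none

/-- The operator `f_0` on shifted tableaux. -/
def tabF0 (T : Tab) : Option Tab :=
  if T (1, 1) = some (1, false) then some (setE T (1, 1) (1, true))
  else none

/-- The operator `e_0` on shifted tableaux. -/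
def tabE0 (T : Tab) : Option Tab :=
  if T (1, 1) = some (1, true) then some (setE T (1, 1) (1, false))
  else none

-- Partial inverse of a partial operator, via choice.
open Classical in
noncomputable def pInv {α : Type} (g : α → Option α) (y : α) : Option α :=
  if h : ∃ x, g x = some y then some h.choose else none

/-- The underlying type of `ShTab⁺_n(lam)`. -/
def ShTy (n : ℕ) (lam : ℕ → ℕ) : Type := Subtype (IsShTab n lam)

/-- The `q⁺_n`-crystal `ShTab⁺_n(lam)`. -/
noncomputable def shtabC (n : ℕ) (lam : ℕ → ℕ) : Crystal n (ShTy n lam) :=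
  let bnd := n + lam 1 + 2
  let fop : ℕ → ShTy n lam → Option (ShTy n lam) := fun i => restrictP _ (tabF n bnd i)
  let fbarop : ShTy n lam → Option (ShTy n lam) := restrictP _ (tabFbar n bnd)
  { wt := fun T k =>
      if 1 ≤ k ∧ k ≤ n then
        (((List.range bnd).map (fun r =>
          ((List.range bnd).filter (fun c => ceilIs T.1 (r + 1, c + 1) k)).length)).sum : ℤ)
      else 0
    f := fop
    e := fun i => pInv (fop i)
    fbar := fbarop
    ebar := pInv fbarop
    f0 := restrictP _ tabF0
    e0 := restrictP _ tabE0 }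

/-- The tableau `T^highest_lam`, with every entry in row `i` equal to `i`. -/
def highestTab (lam : ℕ → ℕ) : Tab := fun p => if InSD lam p then some (p.1, false) else none

def shiftLam (lam : ℕ → ℕ) (k : ℕ) : ℕ → ℕ := fun i => lam (i + k)

/-- The defining property of `T^lowest_lam`: a semistandard shifted tableau of shape `lam`
with no primed diagonal entries, whose entries on the `k`-th ribbon all equal
`(n-k)′` or `n-k`. -/
def IsLowestSpec (n : ℕ) (lam : ℕ → ℕ) (T : Tab) : Prop :=
  IsShTab n lam T ∧
  (∀ i v, T (i, i) = some v → v.2 = false) ∧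
  (∀ k, k < n → ∀ p : ℕ × ℕ, InSD (shiftLam lam k) p → ¬InSD (shiftLam lam (k + 1)) p →
    ∀ v, T p = some v → v.1 = n - k)

/-- Add a prime to every diagonal entry. -/
def primeDiag (T : Tab) : Tab := fun p =>
  if p.1 = p.2 then (T p).map (fun l => (l.1, true)) else T p


/-! ### Orthogonal Edelman-Greene insertion -/

def setZ (T : ZTab) (q : ℕ × ℕ) (l : PLetter) : ZTab := fun p => if p = q then some l else T p

def swapPrZ (T : ZTab) (p q : ℕ × ℕ) : ZTab :=
  match T p, T q with
  | some a, some b => if a.2 ≠ b.2 then setZ (setZ T p (a.1, b.2)) q (b.1, a.2) else T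
  | _, _ => T

/-- One insertion of a letter into a shifted tableau, per Definition 7.1; returns the
resulting tableau, the box added, and whether the process ended in column insertion. -/
def oegIns (bnd : ℕ) : ℕ → ZTab → Bool → ℕ → PLetter → ZTab × ((ℕ × ℕ) × Bool)
  | 0, T, isCol, _, _ => (T, ((0, 0), isCol))
  | fuel + 1, T, isCol, k, x =>
    let cells : List (ℕ × ℕ) :=
      if isCol then (List.range bnd).map (fun r => (r + 1, k))
      else (List.range bnd).map (fun c => (k, k + c))
    let filled := cells.filter (fun q => (T q).isSome)
    match filled.find? (fun q => decide (x.1 ≤ ((T q).getD default).1)) with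
    | none =>
      match cells.find? (fun q => (T q).isNone) with
      | none => (T, ((0, 0), isCol))
      | some q =>
        if q.1 = q.2 then (setZ T q (x.1, false), (q, isCol || x.2))
        else (setZ T q x, (q, isCol))
    | some qy =>
      let y := (T qy).getD default
      if y.1 = x.1 then
        let T' := match filled.find? (fun q => decide (x.1 < ((T q).getD default).1)) with
          | some qt => swapPrZ T qy qt
          | none => T
        oegIns bnd fuel T' (decide (qy.1 = qy.2)) (k + 1) (x.1 + 1, x.2)
      else
        if qy.1 = qy.2 then
          oegIns bnd fuel (setZ T qy (x.1, false)) true (k + 1) (y.1, y.2 || x.2)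
        else
          oegIns bnd fuel (setZ T qy x) false (k + 1) y

def emptyZTab : ZTab := fun _ => none
def emptyTab : Tab := fun _ => none

/-- The orthogonal Edelman-Greene insertion and recording tableaux `(P^O_EG(a), Q^O_EG(a))`. -/
def oegPQ (n : ℕ) (a : Fin n → List PLetter) : ZTab × Tab :=
  let letters : List (PLetter × ℕ) :=
    (List.ofFn (fun i : Fin n => (a i).map (fun l => (l, (i : ℕ) + 1)))).flatten
  let bnd := letters.length + 2
  letters.foldl (fun (PQ : ZTab × Tab) xl =>
    let r := oegIns bnd bnd PQ.1 false 1 xl.1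
    (r.1, setE PQ.2 r.2.1 (xl.2, r.2.2))) (emptyZTab, emptyTab)

def oegP (n : ℕ) (a : Fin n → List PLetter) : ZTab := (oegPQ n a).1
def oegQ (n : ℕ) (a : Fin n → List PLetter) : Tab := (oegPQ n a).2

/-! ### Disjoint unions of crystals -/

def sigmaC {n : ℕ} {ι : Type} {β : ι → Type} (Cf : ∀ i, Crystal n (β i)) :
    Crystal n (Σ i, β i) where
  wt := fun x => (Cf x.1).wt x.2
  e := fun k x => ((Cf x.1).e k x.2).map (fun b => ⟨x.1, b⟩)
  f := fun k x => ((Cf x.1).f k x.2).map (fun b => ⟨x.1, b⟩)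
  ebar := fun x => ((Cf x.1).ebar x.2).map (fun b => ⟨x.1, b⟩)
  fbar := fun x => ((Cf x.1).fbar x.2).map (fun b => ⟨x.1, b⟩)
  e0 := fun x => ((Cf x.1).e0 x.2).map (fun b => ⟨x.1, b⟩)
  f0 := fun x => ((Cf x.1).f0 x.2).map (fun b => ⟨x.1, b⟩)

/-- Involutions in `S_ℤ` (finitely supported permutations of `ℤ`). -/
def IZ : Type := {z : Equiv.Perm ℤ // z * z = 1 ∧ {i : ℤ | z i ≠ i}.Finite}

/-- The disjoint union `⊔_z Incr⁺_n(z)` over all involutions `z ∈ S_ℤ`. -/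
def DomT (n : ℕ) : Type := Σ z : IZ, Subtype (IncrP n z.1)

noncomputable def domC (n : ℕ) : Crystal n (DomT n) := sigmaC (fun z : IZ => incrC n z.1)

/-- Strict partitions in `ℕ^n`. -/
def SPart (n : ℕ) : Type := {lam : ℕ → ℕ // IsStrictPart n lam}

/-- The disjoint union `⊔_lam ShTab⁺_n(lam)` over all strict partitions `lam ∈ ℕ^n`. -/
def CodT (n : ℕ) : Type := Σ lam : SPart n, ShTy n lam.1

noncomputable def codC (n : ℕ) : Crystal n (CodT n) := sigmaC (fun lam : SPart n => shtabC n lam.1)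

/-!
For `1 ≤ i < n` the string reflection `σ_i`, which sends `b` to the element of its `i`-string with
`ε_i` and `φ_i` exchanged, is an involution acting on weights by the transposition `(i i+1)`; so
`ch(B)` is invariant under adjacent transpositions, hence symmetric.

Because `ε_1̄ + φ_1̄ ≤ 1`, the operator `e_1̄` pairs off the elements with `(wt_1, wt_2) ≠ (0, 0)`,
and the monomials of a pair differ by the factor `x_1 / x_2`, which becomes `-1` under
`x_2 ↦ -x_1`; the remaining elements contribute monomials in `x_3, …, x_n`. Likewise `e_0` pairs off
the elements with `wt_1 ≠ 0` without changing weights, and these are exactly the elements whose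
monomials are killed by `x_1 ↦ 0`, so `f - f(0, x_2, …, x_n)` is twice a sum of multiples of `x_1`.
-/

section Strings

variable {B : Type} (g : B → Option B)

theorem iterO_add (k m : ℕ) (b : B) : iterO g (k + m) b = (iterO g k b).bind (iterO g m) := by
  induction m with
  | zero => cases iterO g k b <;> rfl
  | succ m ih => rw [← add_assoc, iterO, ih, Option.bind_assoc]; rfl

theorem iterO_eq_none_of_le {k m : ℕ} {b : B} (h : iterO g k b = none) (hkm : k ≤ m) :
    iterO g m b = none := by
  obtain ⟨j, rfl⟩ := Nat.exists_eq_add_of_le hkm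
  rw [iterO_add, h, Option.bind_none]

-- `eps`, `phi`, `epsBar`, `phiBar`, `eps0`, `phi0` are, by definition, `chainLen` of the
-- corresponding raising and lowering operators.
noncomputable def chainLen (b : B) : ℕ := sSup {k | iterO g k b ≠ none}

theorem chainLen_eq {N : ℕ} {b : B} (hN : iterO g N b ≠ none) (hN1 : iterO g (N + 1) b = none) :
    chainLen g b = N := by
  have hset : {k | iterO g k b ≠ none} = Set.Iic N := by
    ext k
    refine ⟨fun hk => ?_, fun hk h => hN (iterO_eq_none_of_le g h hk)⟩
    by_contra hlt
    exact hk (iterO_eq_none_of_le g hN1 (by simp at hlt; omega))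
  rw [chainLen, hset, csSup_Iic]

theorem iterO_chainLen {b : B} (hb : ∃ N, iterO g N b = none) :
    iterO g (chainLen g b) b ≠ none ∧ iterO g (chainLen g b + 1) b = none := by
  classical
  obtain ⟨N, hN⟩ : ∃ N, Nat.find hb = N + 1 :=
    Nat.exists_eq_succ_of_ne_zero fun h0 => by simpa [h0, iterO] using Nat.find_spec hb
  have hN1 : iterO g (N + 1) b = none := hN ▸ Nat.find_spec hb
  have hN0 : iterO g N b ≠ none := Nat.find_min hb (by omega)
  rw [chainLen_eq g hN0 hN1]
  exact ⟨hN0, hN1⟩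

theorem chainLen_of_iterO {k : ℕ} {b c : B} (hb : ∃ N, iterO g N b = none)
    (h : iterO g k b = some c) : chainLen g b = chainLen g c + k := by
  obtain ⟨hL, hL1⟩ := iterO_chainLen g hb
  have hk : k ≤ chainLen g b := by
    by_contra hlt
    simp [iterO_eq_none_of_le g hL1 (by omega : chainLen g b + 1 ≤ k)] at h
  have hshift : ∀ m, iterO g (k + m) b = iterO g m c := fun m => by
    rw [iterO_add, h, Option.bind_some]
  have hc := chainLen_eq g (N := chainLen g b - k) (b := c)
    (by rwa [← hshift, Nat.add_sub_cancel' hk])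
    (by rwa [← hshift, ← add_assoc, Nat.add_sub_cancel' hk])
  omega

theorem chainLen_eq_zero_iff {b : B} (hb : ∃ N, iterO g N b = none) :
    chainLen g b = 0 ↔ g b = none := by
  refine ⟨fun h0 => ?_, fun h => chainLen_eq g (N := 0) (by simp [iterO]) h⟩
  simpa [h0, iterO] using (iterO_chainLen g hb).2

theorem exists_iterO_eq_some {k : ℕ} {b : B} (hb : ∃ N, iterO g N b = none)
    (hk : k ≤ chainLen g b) : ∃ c, iterO g k b = some c :=
  Option.ne_none_iff_exists'.mp fun h => (iterO_chainLen g hb).1 (iterO_eq_none_of_le g h hk)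

theorem map_iterO_eq_add_nsmul {G : Type} [AddCommMonoid G] (w : B → G) (a : G)
    (hw : ∀ b c, g b = some c → w c = w b + a) {k : ℕ} {b c : B} (h : iterO g k b = some c) :
    w c = w b + k • a := by
  induction k generalizing c with
  | zero => cases h; simp
  | succ k ih =>
    obtain ⟨d, hd, hdc⟩ := Option.bind_eq_some_iff.mp h
    rw [hw d c hdc, ih hd, succ_nsmul, add_assoc]

theorem iterO_eq_some_iff_of_inverse {e f : B → Option B} (hef : ∀ b c, e b = some c ↔ f c = some b)
    {k : ℕ} {b c : B} : iterO e k b = some c ↔ iterO f k c = some b := by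
  induction k generalizing b c with
  | zero => simp [iterO, eq_comm]
  | succ k ih =>
    conv_rhs => rw [add_comm, iterO_add]
    simp only [iterO, Option.bind_eq_some_iff, Option.bind_some, ih, hef]
    exact ⟨fun ⟨d, h1, h2⟩ => ⟨d, h2, h1⟩, fun ⟨d, h1, h2⟩ => ⟨d, h2, h1⟩⟩

end Strings

section Reflection

variable {B : Type} {e f : B → Option B}

variable (e f) in
noncomputable def stringReflect (b : B) : B :=
  if chainLen e b ≤ chainLen f b then (iterO f (chainLen f b - chainLen e b) b).getD b
  else (iterO e (chainLen e b - chainLen f b) b).getD b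

theorem iterO_stringReflect_of_le (hf : ∀ b, ∃ N, iterO f N b = none) {b : B}
    (hb : chainLen e b ≤ chainLen f b) :
    iterO f (chainLen f b - chainLen e b) b = some (stringReflect e f b) := by
  obtain ⟨c, hc⟩ := exists_iterO_eq_some f (hf b) (Nat.sub_le (chainLen f b) (chainLen e b))
  rw [stringReflect, if_pos hb, hc, Option.getD_some]

theorem iterO_stringReflect_of_lt (he : ∀ b, ∃ N, iterO e N b = none) {b : B}
    (hb : chainLen f b < chainLen e b) :
    iterO e (chainLen e b - chainLen f b) b = some (stringReflect e f b) := by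
  obtain ⟨c, hc⟩ := exists_iterO_eq_some e (he b) (Nat.sub_le (chainLen e b) (chainLen f b))
  rw [stringReflect, if_neg hb.not_ge, hc, Option.getD_some]

theorem stringReflect_involutive (hef : ∀ b c, e b = some c ↔ f c = some b)
    (he : ∀ b, ∃ N, iterO e N b = none) (hf : ∀ b, ∃ N, iterO f N b = none) :
    Function.Involutive (stringReflect e f) := by
  intro b
  rcases le_or_gt (chainLen e b) (chainLen f b) with hb | hb
  · rcases (chainLen f b - chainLen e b).eq_zero_or_pos with h0 | hpos
    · have hb' := iterO_stringReflect_of_le hf hb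
      rw [h0] at hb'
      have hfix : stringReflect e f b = b := (Option.some_injective _ hb').symm
      rw [hfix, hfix]
    have hbc := iterO_stringReflect_of_le hf hb
    generalize stringReflect e f b = c at hbc ⊢
    have hcb := (iterO_eq_some_iff_of_inverse hef).2 hbc
    have hε := chainLen_of_iterO e (he c) hcb
    have hφ := chainLen_of_iterO f (hf b) hbc
    have hc := iterO_stringReflect_of_lt (f := f) he (b := c) (by omega)
    rw [show chainLen e c - chainLen f c = chainLen f b - chainLen e b by omega, hcb] at hc
    exact (Option.some_injective _ hc).symm
  · have hbc := iterO_stringReflect_of_lt he hb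
    generalize stringReflect e f b = c at hbc ⊢
    have hcb := (iterO_eq_some_iff_of_inverse hef).1 hbc
    have hε := chainLen_of_iterO e (he b) hbc
    have hφ := chainLen_of_iterO f (hf c) hcb
    have hc := iterO_stringReflect_of_le (e := e) hf (b := c) (by omega)
    rw [show chainLen f c - chainLen e c = chainLen e b - chainLen f b by omega, hcb] at hc
    exact (Option.some_injective _ hc).symm

theorem map_stringReflect (hef : ∀ b c, e b = some c ↔ f c = some b)
    (he : ∀ b, ∃ N, iterO e N b = none) (hf : ∀ b, ∃ N, iterO f N b = none)
    {G : Type} [AddCommGroup G] (w : B → G) (a : G)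
    (hw : ∀ b c, e b = some c → w c = w b + a) (b : B) :
    w (stringReflect e f b) = w b - ((chainLen f b : ℤ) - chainLen e b) • a := by
  rcases le_or_gt (chainLen e b) (chainLen f b) with hb | hb
  · have hcb := (iterO_eq_some_iff_of_inverse hef).2 (iterO_stringReflect_of_le hf hb)
    rw [map_iterO_eq_add_nsmul e w a hw hcb, ← natCast_zsmul, Nat.cast_sub hb]
    abel
  · rw [map_iterO_eq_add_nsmul e w a hw (iterO_stringReflect_of_lt he hb), ← natCast_zsmul,
      Nat.cast_sub hb.le, sub_smul, sub_smul]
    abel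

end Reflection

section Pairing

variable {B : Type} {e f : B → Option B}

theorem isSome_or_isSome_iff_chainLen_add_ne_zero {b : B} (he : ∃ N, iterO e N b = none)
    (hf : ∃ N, iterO f N b = none) :
    (e b).isSome ∨ (f b).isSome ↔ chainLen e b + chainLen f b ≠ 0 := by
  simp only [ne_eq, Nat.add_eq_zero_iff, chainLen_eq_zero_iff e he, chainLen_eq_zero_iff f hf,
    Option.isSome_iff_ne_none, not_and_or]

theorem eq_none_or_eq_none_of_chainLen_add_le_one {b : B} (he : ∃ N, iterO e N b = none)
    (hf : ∃ N, iterO f N b = none) (h : chainLen e b + chainLen f b ≤ 1) :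
    e b = none ∨ f b = none := by
  rw [← chainLen_eq_zero_iff e he, ← chainLen_eq_zero_iff f hf]
  omega

theorem sum_filter_isSome_or_isSome [Fintype B] {M : Type} [AddCommMonoid M]
    (hef : ∀ b c, e b = some c ↔ f c = some b) (hdisj : ∀ b, e b = none ∨ f b = none)
    (F : B → M) :
    ∑ b with (e b).isSome ∨ (f b).isSome, F b =
      ∑ b with (e b).isSome, (F b + F ((e b).getD b)) := by
  classical
  have hdisj' : Disjoint (Finset.univ.filter fun b => (e b).isSome)
      (Finset.univ.filter fun b => (f b).isSome) :=
    Finset.disjoint_filter.2 fun b _ h1 h2 => by rcases hdisj b with h | h <;> simp_all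
  rw [Finset.filter_or, Finset.sum_union hdisj', Finset.sum_add_distrib]
  congr 1
  refine (Finset.sum_nbij' (fun b => (e b).getD b) (fun c => (f c).getD c) ?_ ?_ ?_ ?_ ?_).symm <;>
    intro b hb <;> obtain ⟨c, hc⟩ := Option.isSome_iff_exists.1 (Finset.mem_filter.1 hb).2
  · simp [hc, (hef b c).1 hc]
  · simp [hc, (hef c b).2 hc]
  · simp [hc, (hef b c).1 hc]
  · simp [hc, (hef c b).2 hc]
  · simp [hc]

end Pairing

section Polynomials

open MvPolynomial

theorem isSymmetric_of_rename_swap_succ {R : Type} [CommSemiring R] {n : ℕ}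
    {p : MvPolynomial (Fin n) R}
    (h : ∀ i j : Fin n, (i : ℕ) + 1 = j → rename (Equiv.swap i j) p = p) : p.IsSymmetric := by
  intro σ
  cases n with
  | zero => rw [Subsingleton.elim σ 1, Equiv.Perm.coe_one, rename_id, AlgHom.id_apply]
  | succ m =>
    have hσ : σ ∈ Submonoid.closure (Set.range fun i : Fin m => Equiv.swap i.castSucc i.succ) := by
      rw [Equiv.Perm.mclosure_swap_castSucc_succ]; trivial
    induction hσ using Submonoid.closure_induction with
    | mem τ hτ => obtain ⟨i, rfl⟩ := hτ; exact h _ _ (by simp)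
    | one => rw [Equiv.Perm.coe_one, rename_id, AlgHom.id_apply]
    | mul τ₁ τ₂ _ _ h₁ h₂ => rw [Equiv.Perm.coe_mul, ← rename_rename, h₂, h₁]

theorem prod_pow_add_prod_pow_eq_zero {S : Type} [CommRing S] {n : ℕ} (x : Fin n → S)
    {i j : Fin n} (hij : i ≠ j) (hx : x j = -x i) {d d' : Fin n → ℕ} (hi : d' i = d i + 1)
    (hj : d j = d' j + 1) (hk : ∀ k, k ≠ i → k ≠ j → d' k = d k) :
    ∏ k, x k ^ d k + ∏ k, x k ^ d' k = 0 := by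
  have hj' : j ∈ Finset.univ.erase i := Finset.mem_erase.2 ⟨hij.symm, Finset.mem_univ j⟩
  have hrest : ∏ k ∈ (Finset.univ.erase i).erase j, x k ^ d' k =
      ∏ k ∈ (Finset.univ.erase i).erase j, x k ^ d k :=
    Finset.prod_congr rfl fun k hk' => by
      simp only [Finset.mem_erase] at hk'; rw [hk k hk'.2.1 hk'.1]
  rw [← Finset.mul_prod_erase _ _ (Finset.mem_univ i), ← Finset.mul_prod_erase _ _ hj',
    ← Finset.mul_prod_erase _ (fun k => x k ^ d' k) (Finset.mem_univ i),
    ← Finset.mul_prod_erase _ (fun k => x k ^ d' k) hj', hrest, hi, hj, hx]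
  ring

variable {n : ℕ}

-- The weight is indexed from `1`, as `Crystal.wt` is, and the variables from `0`.
noncomputable def wtMonomial (w : ℕ → ℤ) : MvPolynomial (Fin n) ℤ :=
  ∏ j : Fin n, X j ^ (w (j + 1)).toNat

theorem char_eq_sum_wtMonomial {B : Type} [Fintype B] (C : Crystal n B) :
    char C = ∑ b, wtMonomial (C.wt b) := rfl

theorem aeval_wtMonomial {S : Type} [CommRing S] [Algebra ℤ S] (x : Fin n → S) (w : ℕ → ℤ) :
    aeval x (wtMonomial w) = ∏ j, x j ^ (w (j + 1)).toNat := by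
  simp [wtMonomial, map_prod]

theorem rename_wtMonomial (σ : Equiv.Perm (Fin n)) {w w' : ℕ → ℤ}
    (h : ∀ j : Fin n, w' (σ j + 1) = w (j + 1)) :
    rename σ (wtMonomial w : MvPolynomial (Fin n) ℤ) = wtMonomial w' := by
  simp only [wtMonomial, map_prod, map_pow, rename_X, ← h]
  exact Equiv.prod_comp σ fun j => X j ^ (w' (j + 1)).toNat

theorem wtMonomial_eq_X_mul (j : Fin n) {w : ℕ → ℤ} (hw : 0 < w (j + 1)) :
    (wtMonomial w : MvPolynomial (Fin n) ℤ) =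
      X j * wtMonomial (Function.update w (j + 1) (w (j + 1) - 1)) := by
  have hrest : ∏ k ∈ Finset.univ.erase j,
      X k ^ (Function.update w (j + 1) (w (j + 1) - 1) (k + 1)).toNat =
      ∏ k ∈ Finset.univ.erase j, (X k ^ (w (k + 1)).toNat : MvPolynomial (Fin n) ℤ) :=
    Finset.prod_congr rfl fun k hk => by
      rw [Function.update_of_ne (by simpa [Fin.ext_iff] using (Finset.mem_erase.1 hk).1)]
  simp only [wtMonomial]
  rw [← Finset.mul_prod_erase _ _ (Finset.mem_univ j),
    ← Finset.mul_prod_erase _ _ (Finset.mem_univ j), hrest, Function.update_self, ← mul_assoc,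
    ← pow_succ']
  congr 2
  omega

theorem aeval_wtMonomial_update_zero (j : Fin n) {w : ℕ → ℤ} (hw : 0 ≤ w (j + 1)) :
    aeval (Function.update X j 0) (wtMonomial w : MvPolynomial (Fin n) ℤ) =
      if w (j + 1) = 0 then wtMonomial w else 0 := by
  rw [aeval_wtMonomial]
  split_ifs with h0
  · refine Finset.prod_congr rfl fun k _ => ?_
    rcases eq_or_ne k j with rfl | hk
    · simp [h0]
    · rw [Function.update_of_ne hk]
  · exact Finset.prod_eq_zero (Finset.mem_univ j) (by simp; omega)

end Polynomials

namespace Crystal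

open MvPolynomial

variable {n : ℕ} {B : Type} {C : Crystal n B}

theorem sigma_eq_stringReflect (C : Crystal n B) (i : ℕ) :
    C.sigma i = stringReflect (C.e i) (C.f i) := rfl

theorem IsGL.sigma_involutive (hC : IsGL C) {i : ℕ} (hi1 : 1 ≤ i) (hi2 : i ≤ n - 1) :
    Function.Involutive (C.sigma i) := by
  rw [sigma_eq_stringReflect]
  exact stringReflect_involutive (hC.ef_iff i hi1 hi2) (hC.e_bdd i) (hC.f_bdd i)

theorem IsGL.wt_sigma (hC : IsGL C) {i : ℕ} (hi1 : 1 ≤ i) (hi2 : i ≤ n - 1) (b : B) (j : ℕ) :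
    C.wt (C.sigma i b) j = C.wt b (Equiv.swap i (i + 1) j) := by
  have hroot : ∀ b c, C.e i b = some c →
      C.wt c = C.wt b + fun j => (if j = i then 1 else 0) - (if j = i + 1 then 1 else 0) :=
    fun b c h => funext fun j => (hC.e_wt i hi1 hi2 b c h j).trans (by rw [Pi.add_apply]; ring)
  have hw := congrFun
    (map_stringReflect (hC.ef_iff i hi1 hi2) (hC.e_bdd i) (hC.f_bdd i) C.wt _ hroot b) j
  have hstr : (chainLen (C.f i) b : ℤ) - chainLen (C.e i) b = C.wt b i - C.wt b (i + 1) :=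
    hC.string_eq i hi1 hi2 b
  rw [sigma_eq_stringReflect, hw, hstr, Equiv.swap_apply_def]
  simp only [Pi.sub_apply, Pi.smul_apply, smul_eq_mul]
  split_ifs <;> first | omega | (subst_vars; ring)

theorem IsGL.rename_swap_char [Fintype B] (hC : IsGL C) (i j : Fin n)
    (hij : (i : ℕ) + 1 = j) :
    rename (Equiv.swap i j) (char C) = char C := by
  have hj1 : 1 ≤ (j : ℕ) := by omega
  have hj2 : (j : ℕ) ≤ n - 1 := by omega
  rw [char_eq_sum_wtMonomial, map_sum]
  refine Fintype.sum_bijective _ (hC.sigma_involutive hj1 hj2).bijective _ _ fun b =>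
    rename_wtMonomial _ fun l => ?_
  rw [hC.wt_sigma hj1 hj2]
  congr 1
  rcases eq_or_ne l i with rfl | hli
  · rw [Equiv.swap_apply_left, Equiv.swap_apply_right, hij]
  rcases eq_or_ne l j with rfl | hlj
  · rw [Equiv.swap_apply_right, ← hij, Equiv.swap_apply_left]
  rw [Equiv.swap_apply_of_ne_of_ne hli hlj]
  rw [Ne, Fin.ext_iff] at hli hlj
  exact Equiv.swap_apply_of_ne_of_ne (by omega) (by omega)

theorem IsGL.char_isSymmetric [Fintype B] (hC : IsGL C) : (char C).IsSymmetric :=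
  isSymmetric_of_rename_swap_succ hC.rename_swap_char

theorem IsQ.isSome_ebar_or_fbar_iff (hC : IsQ C) (hn : 2 ≤ n) (b : B) :
    (C.ebar b).isSome ∨ (C.fbar b).isSome ↔ ¬(C.wt b 1 = 0 ∧ C.wt b 2 = 0) := by
  have h : C.epsBar b + C.phiBar b = _ := hC.bar_string hn b
  rw [isSome_or_isSome_iff_chainLen_add_ne_zero (hC.ebar_bdd b) (hC.fbar_bdd b)]
  change C.epsBar b + C.phiBar b ≠ 0 ↔ _
  split_ifs at h <;> simp_all

theorem IsQ.ebar_eq_none_or_fbar_eq_none (hC : IsQ C) (hn : 2 ≤ n) (b : B) :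
    C.ebar b = none ∨ C.fbar b = none := by
  have h : C.epsBar b + C.phiBar b = _ := hC.bar_string hn b
  refine eq_none_or_eq_none_of_chainLen_add_le_one (hC.ebar_bdd b) (hC.fbar_bdd b) ?_
  change C.epsBar b + C.phiBar b ≤ 1
  split_ifs at h <;> omega

theorem IsQ.aeval_wtMonomial_add_of_ebar_eq_some {S : Type} [CommRing S] [Algebra ℤ S]
    (hC : IsQ C) (hn : 2 ≤ n) (x : Fin n → S) (hx : x ⟨1, by omega⟩ = -x ⟨0, by omega⟩)
    {b c : B} (h : C.ebar b = some c) :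
    aeval x (wtMonomial (C.wt b)) + aeval x (wtMonomial (C.wt c)) = 0 := by
  have hw := (hC.ebar_wt hn b c h).1
  have hb1 := hC.wt_nonneg b 1
  have hc2 := hC.wt_nonneg c 2
  have h1 := hw 1
  have h2 := hw 2
  simp only [if_true, if_false, OfNat.ofNat_ne_one] at h1 h2
  rw [aeval_wtMonomial, aeval_wtMonomial]
  refine prod_pow_add_prod_pow_eq_zero x (by simp [Fin.ext_iff]) hx ?_ ?_ fun k hk0 hk1 => ?_
  · simp only [zero_add]; omega
  · simp only [Nat.reduceAdd]; omega
  · rw [hw]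
    simp only [Ne, Fin.ext_iff] at hk0 hk1
    rw [if_neg (by omega), if_neg (by omega), add_zero, sub_zero]

theorem IsQ.aeval_char_mem_supported [Fintype B] (hC : IsQ C) (hn : 2 ≤ n) :
    aeval (fun i : Fin n => if (i : ℕ) = 1 then -X ⟨0, by omega⟩ else (X i : MvPolynomial _ ℤ))
      (char C) ∈ supported ℤ {i : Fin n | 2 ≤ (i : ℕ)} := by
  classical
  set x : Fin n → MvPolynomial (Fin n) ℤ := fun i => if (i : ℕ) = 1 then -X ⟨0, by omega⟩ else X i
  have hcancel : ∑ b with ¬(C.wt b 1 = 0 ∧ C.wt b 2 = 0), aeval x (wtMonomial (C.wt b)) = 0 := by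
    rw [← Finset.filter_congr fun b _ => hC.isSome_ebar_or_fbar_iff hn b,
      sum_filter_isSome_or_isSome hC.bar_iff (hC.ebar_eq_none_or_fbar_eq_none hn)]
    refine Finset.sum_eq_zero fun b hb => ?_
    obtain ⟨c, hc⟩ := Option.isSome_iff_exists.1 (Finset.mem_filter.1 hb).2
    rw [hc, Option.getD_some]
    exact hC.aeval_wtMonomial_add_of_ebar_eq_some hn x (by simp [x]) hc
  rw [char_eq_sum_wtMonomial, map_sum, ← Finset.sum_filter_add_sum_filter_not _
    (fun b => C.wt b 1 = 0 ∧ C.wt b 2 = 0), hcancel, add_zero]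
  refine Subalgebra.sum_mem _ fun b hb => ?_
  obtain ⟨hb1, hb2⟩ := (Finset.mem_filter.1 hb).2
  rw [aeval_wtMonomial]
  refine Subalgebra.prod_mem _ fun k _ => ?_
  by_cases hk : 2 ≤ (k : ℕ)
  · rw [show x k = X k from if_neg (by omega)]
    exact pow_mem (X_mem_supported.2 hk : X k ∈ supported ℤ {i : Fin n | 2 ≤ (i : ℕ)}) _
  · have hk' : (k : ℕ) + 1 = 1 ∨ (k : ℕ) + 1 = 2 := by omega
    rcases hk' with hk' | hk' <;> simp [hk', hb1, hb2]

theorem IsQPlus.isSome_e0_or_f0_iff (hC : IsQPlus C) (b : B) :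
    (C.e0 b).isSome ∨ (C.f0 b).isSome ↔ C.wt b 1 ≠ 0 := by
  have h : C.eps0 b + C.phi0 b = _ := hC.zero_string b
  rw [isSome_or_isSome_iff_chainLen_add_ne_zero (hC.e0_bdd b) (hC.f0_bdd b)]
  change C.eps0 b + C.phi0 b ≠ 0 ↔ _
  split_ifs at h <;> simp_all

theorem IsQPlus.e0_eq_none_or_f0_eq_none (hC : IsQPlus C) (b : B) :
    C.e0 b = none ∨ C.f0 b = none := by
  have h : C.eps0 b + C.phi0 b = _ := hC.zero_string b
  refine eq_none_or_eq_none_of_chainLen_add_le_one (hC.e0_bdd b) (hC.f0_bdd b) ?_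
  change C.eps0 b + C.phi0 b ≤ 1
  split_ifs at h <;> omega

theorem IsQPlus.exists_char_sub_aeval_eq [Fintype B] (hC : IsQPlus C) (hn : 1 ≤ n) :
    ∃ h : MvPolynomial (Fin n) ℤ,
      char C - aeval (fun i : Fin n => if (i : ℕ) = 0 then 0 else X i) (char C) =
        MvPolynomial.C 2 * X ⟨0, by omega⟩ * h := by
  classical
  set i₀ : Fin n := ⟨0, by omega⟩
  have hx : (fun i : Fin n => if (i : ℕ) = 0 then 0 else (X i : MvPolynomial (Fin n) ℤ)) =
      Function.update X i₀ 0 := by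
    funext i
    simp [Function.update_apply, i₀, Fin.ext_iff]
  have hdiff : char C - aeval (Function.update X i₀ 0) (char C) =
      ∑ b with C.wt b 1 ≠ 0, wtMonomial (C.wt b) := by
    rw [char_eq_sum_wtMonomial, map_sum, ← Finset.sum_sub_distrib, Finset.sum_filter]
    refine Finset.sum_congr rfl fun b _ => ?_
    rw [aeval_wtMonomial_update_zero i₀ (hC.wt_nonneg b 1), show (i₀ : ℕ) + 1 = 1 from rfl]
    split_ifs <;> simp_all
  refine ⟨∑ b with (C.e0 b).isSome, wtMonomial (Function.update (C.wt b) 1 (C.wt b 1 - 1)), ?_⟩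
  rw [hx, hdiff, ← Finset.filter_congr fun b _ => hC.isSome_e0_or_f0_iff b,
    sum_filter_isSome_or_isSome hC.zero_iff hC.e0_eq_none_or_f0_eq_none, Finset.mul_sum]
  refine Finset.sum_congr rfl fun b hb => ?_
  have hb0 := (Finset.mem_filter.1 hb).2
  have hb1 : 0 < C.wt b 1 :=
    lt_of_le_of_ne (hC.wt_nonneg b 1) ((hC.isSome_e0_or_f0_iff b).1 (Or.inl hb0)).symm
  obtain ⟨c, hc⟩ := Option.isSome_iff_exists.1 hb0
  rw [hc, Option.getD_some, funext (hC.e0_wt b c hc).1, wtMonomial_eq_X_mul i₀ hb1, map_ofNat]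
  ring

end Crystal

/-- The character of a finite `q⁺_n`-crystal lies in `Sym_Q(x_1,…,x_n)`:
it is symmetric, the substitution `x_2 ↦ -x_1` kills the variables `x_1, x_2` (when `n ≥ 2`),
and `f - f(0,x_2,…,x_n)` is divisible by `2 x_1`. -/
theorem char_mem_SymQ (n : ℕ) (hn : 1 ≤ n) {B : Type} [Fintype B] (C : Crystal n B)
    (hC : IsQPlus C) :
    (char C).IsSymmetric ∧
    (2 ≤ n →
      (MvPolynomial.aeval (fun i : Fin n =>
          if (i : ℕ) = 1 then -(MvPolynomial.X (⟨0, by omega⟩ : Fin n))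
          else MvPolynomial.X i) (char C) : MvPolynomial (Fin n) ℤ) ∈
        MvPolynomial.supported ℤ {i : Fin n | 2 ≤ (i : ℕ)}) ∧
    (∃ h : MvPolynomial (Fin n) ℤ,
      char C - (MvPolynomial.aeval (fun i : Fin n =>
          if (i : ℕ) = 0 then 0 else MvPolynomial.X i) (char C) : MvPolynomial (Fin n) ℤ) =
        MvPolynomial.C 2 * MvPolynomial.X (⟨0, by omega⟩ : Fin n) * h) :=
  ⟨hC.char_isSymmetric, hC.aeval_char_mem_supported, hC.exists_char_sub_aeval_eq hn⟩

end QPaper
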